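/- Let d, κ, L₁, L₂ ∈ (0,∞), θ̄ ∈ ℝ, β₊, β₋ ∈ [0,∞) with (β₊,β₋) ≠ (0,0), Γ = (L₁𝕋)×(L₂𝕋), Ω = Γ×(−d,0), Σ₊ = Γ×{0}, Σ₋ = Γ×{−d}. Let θ_eq(x) = (κβ₊θ̄ + β₊β₋θ̄(x₃+d))/(κ(β₊+β₋)+β₊β₋d). Suppose u : [0,T]×Ω̄ → ℝ³ is smooth with div u(t,·) = 0 in Ω and u₃ = 0 on Σ₊ and Σ₋, and θ : [0,T]×Ω̄ → ℝ is a smooth solution of ∂ₜθ + u·∇θ = κΔθ in Ω, κ∂₃θ = β₊(θ̄−θ) on Σ₊, κ∂₃θ = β₋θ on Σ₋. Then for every t ∈ [0,T], (1/2)(d/dt)∫_Ω |θ−θ_eq|² dx + κ∫_Ω |∇(θ−θ_eq)|² dx + β₊∫_{Σ₊}|θ−θ_eq|² + β₋∫_{Σ₋}|θ−θ_eq|² = −(∂₃θ_eq)∫_Ω (θ−θ_eq) u₃ dx, where ∂₃θ_eq = β₊β₋θ̄/(κ(β₊+β₋)+β₊β₋d). -/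

import Mathlib

open MeasureTheory Real Set

noncomputable section

/-- Partial derivative of `f : ℝ³ → ℝ` in the `i`-th coordinate direction. -/
def pd (i : Fin 3) (f : (Fin 3 → ℝ) → ℝ) (x : Fin 3 → ℝ) : ℝ :=
  fderiv ℝ f x (Pi.single i 1)

/-- Fundamental domain `(0,L₁)×(0,L₂)×(−d,0)` of the periodic slab `Ω = Γ×(−d,0)`. -/
def slab (L₁ L₂ d : ℝ) : Set (Fin 3 → ℝ) :=
  Set.univ.pi ![Ioo 0 L₁, Ioo 0 L₂, Ioo (-d) 0]

/-- Fundamental domain of the horizontal cross-section `Γ = (L₁𝕋)×(L₂𝕋)`. -/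
def rect (L₁ L₂ : ℝ) : Set (ℝ × ℝ) := Ioo 0 L₁ ×ˢ Ioo 0 L₂

section helpers
variable {L₁ L₂ d : ℝ}

/-- corner vectors -/
def aV (d : ℝ) : Fin 3 → ℝ := ![0, 0, -d]
def bV (L₁ L₂ : ℝ) : Fin 3 → ℝ := ![L₁, L₂, 0]

lemma slab_eq_pi_Ioo : slab L₁ L₂ d = Set.univ.pi fun i => Ioo (aV d i) (bV L₁ L₂ i) := by
  have h : (![Ioo 0 L₁, Ioo 0 L₂, Ioo (-d) 0] : Fin 3 → Set ℝ)
      = fun i => Ioo (aV d i) (bV L₁ L₂ i) := by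
    funext i; fin_cases i <;> simp [aV, bV]
  rw [slab, h]

lemma slab_ae_Icc :
    (slab L₁ L₂ d : Set (Fin 3 → ℝ)) =ᵐ[volume] Icc (aV d) (bV L₁ L₂) := by
  rw [slab_eq_pi_Ioo]
  have := MeasureTheory.Measure.univ_pi_Ioo_ae_eq_Icc
    (μ := fun _ : Fin 3 => (volume : Measure ℝ)) (f := aV d) (g := bV L₁ L₂)
  simpa [← volume_pi] using this

lemma measurableSet_slab : MeasurableSet (slab L₁ L₂ d) := by
  rw [slab_eq_pi_Ioo]
  exact MeasurableSet.univ_pi fun i => measurableSet_Ioo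

lemma slab_subset_Icc : slab L₁ L₂ d ⊆ Icc (aV d) (bV L₁ L₂) := by
  rw [slab_eq_pi_Ioo, ← Set.pi_univ_Icc]
  exact Set.pi_mono fun i _ => Ioo_subset_Icc_self

lemma integrableOn_slab_of_continuous {g : (Fin 3 → ℝ) → ℝ} (hg : Continuous g) :
    IntegrableOn g (slab L₁ L₂ d) := by
  refine IntegrableOn.mono_set ?_ slab_subset_Icc
  exact hg.continuousOn.integrableOn_compact isCompact_Icc

end helpers

section calcHelpers

lemma topLe1 : ((⊤ : ℕ∞) : WithTop ℕ∞) ≠ 0 := by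
  simp

lemma topLeS : ((⊤ : ℕ∞) : WithTop ℕ∞) + 1 ≤ ((⊤ : ℕ∞) : WithTop ℕ∞) := by
  have : ((⊤ : ℕ∞) : WithTop ℕ∞) + 1 = ((⊤ + 1 : ℕ∞) : WithTop ℕ∞) := by push_cast; ring
  rw [this]
  exact_mod_cast le_top

lemma contDiff_pd {f : (Fin 3 → ℝ) → ℝ} (hf : ContDiff ℝ (⊤ : ℕ∞) f) (i : Fin 3) :
    ContDiff ℝ (⊤ : ℕ∞) (pd i f) :=
  (hf.fderiv_right topLeS).clm_apply contDiff_const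

lemma pd_periodic {f : (Fin 3 → ℝ) → ℝ} (hf : Differentiable ℝ f) {c : Fin 3 → ℝ}
    (hper : ∀ x, f (x + c) = f x) (i : Fin 3) (x : Fin 3 → ℝ) :
    pd i f (x + c) = pd i f x := by
  have h1 : HasFDerivAt (fun y => f (y + c)) (fderiv ℝ f (x + c)) x := by
    have := (hf (x + c)).hasFDerivAt.comp x ((hasFDerivAt_id x).add_const c)
    simpa [Function.comp_def] using this
  have h2 : (fun y => f (y + c)) = f := funext hper
  rw [h2] at h1
  rw [pd, pd, h1.fderiv]

lemma pd_sub {f g : (Fin 3 → ℝ) → ℝ} (hf : Differentiable ℝ f) (hg : Differentiable ℝ g)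
    (i : Fin 3) (x : Fin 3 → ℝ) :
    pd i (fun y => f y - g y) x = pd i f x - pd i g x := by
  rw [pd, fderiv_fun_sub (hf x) (hg x)]; rfl

lemma pd_add_const {f : (Fin 3 → ℝ) → ℝ} (c : ℝ) (i : Fin 3) (x : Fin 3 → ℝ) :
    pd i (fun y => f y + c) x = pd i f x := by
  rw [pd, fderiv_add_const]; rfl

lemma hasDerivAt_section_t {F : ℝ × (Fin 3 → ℝ) → ℝ} (hF : ContDiff ℝ (⊤ : ℕ∞) F)
    (t : ℝ) (x : Fin 3 → ℝ) :
    HasDerivAt (fun s => F (s, x)) (fderiv ℝ F (t, x) (1, 0)) t := by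
  have h1 : HasFDerivAt (fun s : ℝ => (s, x))
      ((ContinuousLinearMap.id ℝ ℝ).prod 0) t :=
    (hasFDerivAt_id t).prodMk (hasFDerivAt_const x t)
  have h2 := (hF.differentiable topLe1 (t, x)).hasFDerivAt.comp t h1
  simpa [Function.comp_def] using h2.hasDerivAt

lemma pd_section_eq {F : ℝ × (Fin 3 → ℝ) → ℝ} (hF : ContDiff ℝ (⊤ : ℕ∞) F)
    (t : ℝ) (x : Fin 3 → ℝ) (i : Fin 3) :
    pd i (fun y => F (t, y)) x = fderiv ℝ F (t, x) (0, Pi.single i 1) := by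
  have h1 : HasFDerivAt (fun y : Fin 3 → ℝ => (t, y))
      ((0 : (Fin 3 → ℝ) →L[ℝ] ℝ).prod (ContinuousLinearMap.id ℝ _)) x :=
    (hasFDerivAt_const t x).prodMk (hasFDerivAt_id x)
  have h2 := (hF.differentiable topLe1 (t, x)).hasFDerivAt.comp x h1
  have h2' : HasFDerivAt (fun y => F (t, y))
      ((fderiv ℝ F (t, x)).comp
        ((0 : (Fin 3 → ℝ) →L[ℝ] ℝ).prod (ContinuousLinearMap.id ℝ _))) x := h2
  rw [pd, h2'.fderiv]
  simp

lemma continuous_fderiv_apply {E F : Type*} [NormedAddCommGroup E] [NormedSpace ℝ E]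
    [NormedAddCommGroup F] [NormedSpace ℝ F] {f : E → F}
    (hf : ContDiff ℝ (⊤ : ℕ∞) f) (v : E) :
    Continuous fun x => fderiv ℝ f x v :=
  (hf.continuous_fderiv topLe1).clm_apply continuous_const

lemma ins0 (c : ℝ) (y : Fin 2 → ℝ) : Fin.insertNth (0 : Fin 3) c y = ![c, y 0, y 1] := by
  funext i; fin_cases i <;> rfl

lemma ins1 (c : ℝ) (y : Fin 2 → ℝ) : Fin.insertNth (1 : Fin 3) c y = ![y 0, c, y 1] := by
  funext i; fin_cases i <;> rfl

lemma ins2 (c : ℝ) (y : Fin 2 → ℝ) : Fin.insertNth (2 : Fin 3) c y = ![y 0, y 1, c] := by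
  funext i; fin_cases i <;> rfl

lemma integral_face (L₁ L₂ : ℝ) (g : ℝ × ℝ → ℝ) (G : (Fin 2 → ℝ) → ℝ)
    (hG : ∀ y, G y = g (y 0, y 1)) :
    (∫ y in Icc (![0, 0] : Fin 2 → ℝ) ![L₁, L₂], G y) = ∫ p in rect L₁ L₂, g p := by
  rw [show G = fun y => g (y 0, y 1) from funext hG]
  have h1 : (Set.univ.pi fun i : Fin 2 => Ioo ((![0, 0] : Fin 2 → ℝ) i) ((![L₁, L₂] : Fin 2 → ℝ) i))
      =ᵐ[volume] Icc (![0, 0] : Fin 2 → ℝ) ![L₁, L₂] := by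
    have := MeasureTheory.Measure.univ_pi_Ioo_ae_eq_Icc
      (μ := fun _ : Fin 2 => (volume : Measure ℝ)) (f := (![0, 0] : Fin 2 → ℝ))
      (g := (![L₁, L₂] : Fin 2 → ℝ))
    simpa [← volume_pi] using this
  rw [← setIntegral_congr_set h1]
  have h2 : (MeasurableEquiv.finTwoArrow (α := ℝ)) ⁻¹' (rect L₁ L₂)
      = Set.univ.pi fun i : Fin 2 => Ioo ((![0, 0] : Fin 2 → ℝ) i) ((![L₁, L₂] : Fin 2 → ℝ) i) := by
    ext y
    simp [rect, MeasurableEquiv.finTwoArrow, Fin.forall_fin_two]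
  have h3 := MeasureTheory.setIntegral_map_equiv (μ := (volume : Measure (Fin 2 → ℝ)))
    (MeasurableEquiv.finTwoArrow (α := ℝ)) g (rect L₁ L₂)
  rw [(volume_preserving_finTwoArrow ℝ).map_eq] at h3
  rw [h2] at h3
  rw [h3]
  rfl

end calcHelpers

/-- **`L²` energy identity for the passive scalar on a rigid periodic slab with Robin
boundary conditions.**  If `θ` solves `∂ₜθ + u·∇θ = κΔθ` with `κ∂₃θ = β₊(θ̄−θ)` on `Σ₊`
and `κ∂₃θ = β₋θ` on `Σ₋`, `u` being divergence-free and tangent to the boundary, then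
`½ d/dt ∫_Ω |θ−θ_eq|² + κ∫_Ω |∇(θ−θ_eq)|² + β₊∫_{Σ₊}|θ−θ_eq|² + β₋∫_{Σ₋}|θ−θ_eq|²
  = −(∂₃θ_eq) ∫_Ω (θ−θ_eq) u₃`. -/
theorem rigid_energy_identity
    (d κ L₁ L₂ T θbar βp βm : ℝ)
    (hd : 0 < d) (hκ : 0 < κ) (hL₁ : 0 < L₁) (hL₂ : 0 < L₂) (hT : 0 < T)
    (hβp : 0 ≤ βp) (hβm : 0 ≤ βm) (hβ : ¬(βp = 0 ∧ βm = 0))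
    (u : ℝ → (Fin 3 → ℝ) → (Fin 3 → ℝ)) (θ : ℝ → (Fin 3 → ℝ) → ℝ)
    (hu_smooth : ContDiff ℝ (⊤ : ℕ∞) (fun q : ℝ × (Fin 3 → ℝ) => u q.1 q.2))
    (hθ_smooth : ContDiff ℝ (⊤ : ℕ∞) (fun q : ℝ × (Fin 3 → ℝ) => θ q.1 q.2))
    (hu_per1 : ∀ t x, u t (x + Pi.single 0 L₁) = u t x)
    (hu_per2 : ∀ t x, u t (x + Pi.single 1 L₂) = u t x)
    (hθ_per1 : ∀ t x, θ t (x + Pi.single 0 L₁) = θ t x)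
    (hθ_per2 : ∀ t x, θ t (x + Pi.single 1 L₂) = θ t x)
    (hdiv : ∀ t ∈ Icc 0 T, ∀ x ∈ slab L₁ L₂ d, (∑ i, pd i (fun y => u t y i) x) = 0)
    (hu3_top : ∀ t ∈ Icc 0 T, ∀ p : ℝ × ℝ, u t ![p.1, p.2, 0] 2 = 0)
    (hu3_bot : ∀ t ∈ Icc 0 T, ∀ p : ℝ × ℝ, u t ![p.1, p.2, -d] 2 = 0)
    (hpde : ∀ t ∈ Icc 0 T, ∀ x ∈ slab L₁ L₂ d,
      deriv (fun s => θ s x) t + (∑ i, u t x i * pd i (θ t) x)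
        = κ * ∑ i, pd i (pd i (θ t)) x)
    (hbc_top : ∀ t ∈ Icc 0 T, ∀ p : ℝ × ℝ,
      κ * pd 2 (θ t) ![p.1, p.2, 0] = βp * (θbar - θ t ![p.1, p.2, 0]))
    (hbc_bot : ∀ t ∈ Icc 0 T, ∀ p : ℝ × ℝ,
      κ * pd 2 (θ t) ![p.1, p.2, -d] = βm * θ t ![p.1, p.2, -d])
    (θeq : (Fin 3 → ℝ) → ℝ)
    (hθeq : ∀ x, θeq x =
      (κ * βp * θbar + βp * βm * θbar * (x 2 + d)) / (κ * (βp + βm) + βp * βm * d))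
    (dzθeq : ℝ)
    (hdz : dzθeq = βp * βm * θbar / (κ * (βp + βm) + βp * βm * d)) :
    ∀ t ∈ Icc 0 T,
      HasDerivWithinAt (fun s => (1 / 2) * ∫ x in slab L₁ L₂ d, (θ s x - θeq x) ^ 2)
        (-(κ * (∫ x in slab L₁ L₂ d, ∑ i, (pd i (fun y => θ t y - θeq y) x) ^ 2)
            + βp * (∫ p in rect L₁ L₂, (θ t ![p.1, p.2, 0] - θeq ![p.1, p.2, 0]) ^ 2)
            + βm * (∫ p in rect L₁ L₂, (θ t ![p.1, p.2, -d] - θeq ![p.1, p.2, -d]) ^ 2))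
          - dzθeq * (∫ x in slab L₁ L₂ d, (θ t x - θeq x) * u t x 2))
        (Icc 0 T) t := by
  intro t ht
  -- basic positivity and algebra about `θeq`
  have hβsum : 0 < βp + βm := by
    rcases hβp.lt_or_eq with h | h
    · linarith
    · rcases hβm.lt_or_eq with h' | h'
      · linarith
      · exact absurd ⟨h.symm, h'.symm⟩ hβ
  have hD : 0 < κ * (βp + βm) + βp * βm * d := by positivity
  set c₀ : ℝ := (κ * βp * θbar + βp * βm * θbar * d) / (κ * (βp + βm) + βp * βm * d) with hc₀
  have hθeq' : ∀ x : Fin 3 → ℝ, θeq x = c₀ + dzθeq * x 2 := by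
    intro x
    rw [hθeq, hdz, hc₀]
    field_simp
    ring
  have htop_alg : βp * θbar - κ * dzθeq = βp * c₀ := by
    rw [hdz, hc₀]
    field_simp
    ring
  have hbot_alg : κ * dzθeq = βm * (c₀ + dzθeq * (-d)) := by
    rw [hdz, hc₀]
    field_simp
    ring
  -- smoothness of the various sections
  have hθt : ∀ s : ℝ, ContDiff ℝ (⊤ : ℕ∞) (θ s) := fun s =>
    hθ_smooth.comp (contDiff_const.prodMk contDiff_id)
  have hθeqC : ContDiff ℝ (⊤ : ℕ∞) θeq := by
    rw [funext hθeq']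
    exact contDiff_const.add (contDiff_const.mul (contDiff_pi.mp contDiff_id 2))
  have hφC : ∀ s : ℝ, ContDiff ℝ (⊤ : ℕ∞) (fun x => θ s x - θeq x) := fun s =>
    (hθt s).sub hθeqC
  have huiC : ∀ (s : ℝ) (i : Fin 3), ContDiff ℝ (⊤ : ℕ∞) (fun x => u s x i) := fun s i =>
    (contDiff_pi.mp (hu_smooth.comp (contDiff_const.prodMk contDiff_id)) i : _)
  -- derivative of `θeq`
  have hθeqD : ∀ (i : Fin 3) (x : Fin 3 → ℝ),
      pd i θeq x = dzθeq * (Pi.single i (1:ℝ) : Fin 3 → ℝ) 2 := by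
    intro i x
    have h : HasFDerivAt θeq (dzθeq • (ContinuousLinearMap.proj (R := ℝ)
        (φ := fun _ : Fin 3 => ℝ) 2)) x := by
      rw [funext hθeq']
      exact ((ContinuousLinearMap.proj (R := ℝ) (φ := fun _ : Fin 3 => ℝ)
        2).hasFDerivAt.const_mul dzθeq).const_add c₀
    rw [pd, h.fderiv]
    simp
  -- time derivative function
  set Dt : ℝ → (Fin 3 → ℝ) → ℝ :=
    fun s x => fderiv ℝ (fun q : ℝ × (Fin 3 → ℝ) => θ q.1 q.2) (s, x) (1, 0) with hDtdef
  have hDt : ∀ (s : ℝ) (x : Fin 3 → ℝ), HasDerivAt (fun s' => θ s' x) (Dt s x) s := fun s x =>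
    hasDerivAt_section_t hθ_smooth s x
  -- Step 1: differentiation under the integral sign
  have hEnergy : HasDerivAt (fun s => ∫ x in slab L₁ L₂ d, (θ s x - θeq x) ^ 2)
      (∫ x in slab L₁ L₂ d, 2 * (θ t x - θeq x) * Dt t x) t := by
    have hμfin : volume (slab L₁ L₂ d) < ⊤ :=
      lt_of_le_of_lt (measure_mono slab_subset_Icc) isCompact_Icc.measure_lt_top
    have hθc : Continuous (fun q : ℝ × (Fin 3 → ℝ) => θ q.1 q.2) := hθ_smooth.continuous
    have h1 : Continuous fun q : ℝ × (Fin 3 → ℝ) => Dt q.1 q.2 :=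
      continuous_fderiv_apply hθ_smooth ((1 : ℝ), (0 : Fin 3 → ℝ))
    have hF'c : Continuous (fun q : ℝ × (Fin 3 → ℝ) => 2 * (θ q.1 q.2 - θeq q.2) * Dt q.1 q.2) :=
      (continuous_const.mul (hθc.sub (hθeqC.continuous.comp continuous_snd))).mul h1
    have hK : IsCompact ((Icc (t - 1) (t + 1)) ×ˢ (Icc (aV d) (bV L₁ L₂))) :=
      isCompact_Icc.prod isCompact_Icc
    obtain ⟨C, hC⟩ := hK.exists_bound_of_continuousOn hF'c.continuousOn
    refine (hasDerivAt_integral_of_dominated_loc_of_deriv_le (s := Metric.ball t 1)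
      (F' := fun s x => 2 * (θ s x - θeq x) * Dt s x)
      (bound := fun _ => C) (Metric.ball_mem_nhds t one_pos) ?_ ?_ ?_ ?_ ?_ ?_).2
    · exact Filter.Eventually.of_forall fun s =>
        (((hθt s).continuous.sub hθeqC.continuous).pow 2).aestronglyMeasurable
    · exact integrableOn_slab_of_continuous (((hθt t).continuous.sub hθeqC.continuous).pow 2)
    · exact (hF'c.comp (Continuous.prodMk_right t)).aestronglyMeasurable
    · refine (ae_restrict_iff' measurableSet_slab).2 (Filter.Eventually.of_forall
        fun x hx s hs => ?_)
      have hs' : |s - t| < 1 := by simpa [Real.dist_eq] using hs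
      have h1 := abs_lt.mp hs'
      exact hC (s, x) ⟨⟨by linarith [h1.1], by linarith [h1.2]⟩, slab_subset_Icc hx⟩
    · exact integrableOn_const hμfin.ne
    · refine Filter.Eventually.of_forall fun x s hs => ?_
      have h := ((hDt s x).sub_const (θeq x)).pow 2
      simpa [Pi.pow_def] using h
  -- Step 2: integration by parts identity
  have hIBP : (∫ x in slab L₁ L₂ d, (θ t x - θeq x) * Dt t x)
      = -(κ * (∫ x in slab L₁ L₂ d, ∑ i, (pd i (fun y => θ t y - θeq y) x) ^ 2)
            + βp * (∫ p in rect L₁ L₂, (θ t ![p.1, p.2, 0] - θeq ![p.1, p.2, 0]) ^ 2)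
            + βm * (∫ p in rect L₁ L₂, (θ t ![p.1, p.2, -d] - θeq ![p.1, p.2, -d]) ^ 2))
          - dzθeq * (∫ x in slab L₁ L₂ d, (θ t x - θeq x) * u t x 2) := by
    -- differentiability facts
    have hφC' := hφC t
    have hφd : Differentiable ℝ (fun x => θ t x - θeq x) := hφC'.differentiable topLe1
    have hθtd : Differentiable ℝ (θ t) := (hθt t).differentiable topLe1
    have hθeqd : Differentiable ℝ θeq := hθeqC.differentiable topLe1
    have hud : ∀ i : Fin 3, Differentiable ℝ (fun x => u t x i) := fun i =>
      (huiC t i).differentiable topLe1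
    have hψC : ∀ i : Fin 3, ContDiff ℝ (⊤ : ℕ∞) (pd i (fun y => θ t y - θeq y)) := fun i =>
      contDiff_pd hφC' i
    have hψd : ∀ i : Fin 3, Differentiable ℝ (pd i (fun y => θ t y - θeq y)) := fun i =>
      (hψC i).differentiable topLe1
    -- the vector field and its derivative
    set f : Fin 3 → (Fin 3 → ℝ) → ℝ := fun i x =>
      κ * ((θ t x - θeq x) * pd i (fun y => θ t y - θeq y) x)
        - 1 / 2 * ((θ t x - θeq x) * (θ t x - θeq x) * u t x i) with hfdef
    set f' : Fin 3 → (Fin 3 → ℝ) → (Fin 3 → ℝ) →L[ℝ] ℝ := fun i x =>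
      κ • ((θ t x - θeq x) • fderiv ℝ (pd i (fun y => θ t y - θeq y)) x
            + pd i (fun y => θ t y - θeq y) x • fderiv ℝ (fun y => θ t y - θeq y) x)
        - (1 / 2 : ℝ) • (((θ t x - θeq x) * (θ t x - θeq x)) • fderiv ℝ (fun y => u t y i) x
            + u t x i • ((θ t x - θeq x) • fderiv ℝ (fun y => θ t y - θeq y) x
              + (θ t x - θeq x) • fderiv ℝ (fun y => θ t y - θeq y) x)) with hf'def
    have hf' : ∀ (i : Fin 3) (x : Fin 3 → ℝ), HasFDerivAt (f i) (f' i x) x := by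
      intro i x
      exact (((hφd x).hasFDerivAt.mul ((hψd i) x).hasFDerivAt).const_mul κ).sub
        ((((hφd x).hasFDerivAt.mul (hφd x).hasFDerivAt).mul ((hud i) x).hasFDerivAt).const_mul
          (1 / 2))
    -- pointwise value of the divergence
    have hev : ∀ (x : Fin 3 → ℝ) (i : Fin 3), f' i x (Pi.single i 1) =
        κ * (pd i (fun y => θ t y - θeq y) x) ^ 2
        + κ * ((θ t x - θeq x) * pd i (pd i (fun y => θ t y - θeq y)) x)
        - (θ t x - θeq x) * (u t x i * pd i (fun y => θ t y - θeq y) x)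
        - 1 / 2 * ((θ t x - θeq x) * (θ t x - θeq x)) * pd i (fun y => u t y i) x := by
      intro x i
      simp only [hf'def, ContinuousLinearMap.sub_apply, ContinuousLinearMap.add_apply,
        ContinuousLinearMap.smul_apply, smul_eq_mul, pd]
      ring
    have hfdiv : ∀ x : Fin 3 → ℝ, (∑ i, f' i x (Pi.single i 1)) =
        κ * (∑ i, (pd i (fun y => θ t y - θeq y) x) ^ 2)
        + κ * ((θ t x - θeq x) * ∑ i, pd i (pd i (fun y => θ t y - θeq y)) x)
        - (θ t x - θeq x) * (∑ i, u t x i * pd i (fun y => θ t y - θeq y) x)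
        - 1 / 2 * ((θ t x - θeq x) * (θ t x - θeq x)) * (∑ i, pd i (fun y => u t y i) x) := by
      intro x
      rw [Fin.sum_univ_three, Fin.sum_univ_three, Fin.sum_univ_three, Fin.sum_univ_three,
        Fin.sum_univ_three, hev x 0, hev x 1, hev x 2]
      ring
    -- pointwise PDE identity on the slab
    have e0 : (Pi.single (0 : Fin 3) (1 : ℝ) : Fin 3 → ℝ) 2 = 0 := by
      simp [Pi.single_apply]
    have e1 : (Pi.single (1 : Fin 3) (1 : ℝ) : Fin 3 → ℝ) 2 = 0 := by
      simp [Pi.single_apply]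
    have e2 : (Pi.single (2 : Fin 3) (1 : ℝ) : Fin 3 → ℝ) 2 = 1 := by
      simp [Pi.single_apply]
    have hsub : ∀ (i : Fin 3) (x : Fin 3 → ℝ),
        pd i (fun y => θ t y - θeq y) x = pd i (θ t) x - pd i θeq x := fun i x =>
      pd_sub hθtd hθeqd i x
    have hθi : ∀ (i : Fin 3) (x : Fin 3 → ℝ),
        pd i (θ t) x = pd i (fun y => θ t y - θeq y) x
          + dzθeq * (Pi.single i (1 : ℝ) : Fin 3 → ℝ) 2 := by
      intro i x
      rw [hsub i x, hθeqD i x]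
      ring
    have hdd : ∀ (i : Fin 3) (x : Fin 3 → ℝ),
        pd i (pd i (fun y => θ t y - θeq y)) x = pd i (pd i (θ t)) x := by
      intro i x
      have hfun : pd i (fun y => θ t y - θeq y)
          = fun z => pd i (θ t) z - dzθeq * (Pi.single i (1 : ℝ) : Fin 3 → ℝ) 2 := by
        funext z
        rw [hsub i z, hθeqD i z]
      rw [hfun, pd_sub ((contDiff_pd (hθt t) i).differentiable topLe1)
        (differentiable_const _) i x]
      have hzero : pd i (fun _ : Fin 3 → ℝ =>
          dzθeq * (Pi.single i (1 : ℝ) : Fin 3 → ℝ) 2) x = 0 := by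
        rw [pd, fderiv_fun_const]
        simp
      rw [hzero]
      ring
    have hpt : ∀ x ∈ slab L₁ L₂ d, (θ t x - θeq x) * Dt t x =
        (∑ i, f' i x (Pi.single i 1))
        - (κ * (∑ i, (pd i (fun y => θ t y - θeq y) x) ^ 2)
           + dzθeq * ((θ t x - θeq x) * u t x 2)) := by
      intro x hx
      have hp := hpde t ht x hx
      rw [(hDt t x).deriv] at hp
      have hdiv' := hdiv t ht x hx
      rw [hfdiv x]
      simp only [Fin.sum_univ_three] at hp hdiv' ⊢
      rw [← hdd 0 x, ← hdd 1 x, ← hdd 2 x, hθi 0 x, hθi 1 x, hθi 2 x, e0, e1, e2] at hp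
      linear_combination (θ t x - θeq x) * hp
        + (1 / 2 * ((θ t x - θeq x) * (θ t x - θeq x))) * hdiv'
    -- continuity facts
    have hcφ : Continuous (fun x => θ t x - θeq x) := hφC'.continuous
    have hcψ : ∀ i : Fin 3, Continuous (pd i (fun y => θ t y - θeq y)) := fun i =>
      (hψC i).continuous
    have hcu : ∀ i : Fin 3, Continuous (fun x => u t x i) := fun i => (huiC t i).continuous
    have hcf : ∀ i : Fin 3, Continuous (f i) := by
      intro i
      rw [hfdef]
      exact (continuous_const.mul (hcφ.mul (hcψ i))).sub
        (continuous_const.mul ((hcφ.mul hcφ).mul (hcu i)))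
    have hcdiv : Continuous fun x => ∑ i, f' i x (Pi.single i 1) := by
      rw [funext hfdiv]
      refine (((continuous_const.mul (continuous_finset_sum _ fun i _ => (hcψ i).pow 2)).add
        (continuous_const.mul (hcφ.mul (continuous_finset_sum _ fun i _ =>
          (contDiff_pd (hψC i) i).continuous)))).sub
        (hcφ.mul (continuous_finset_sum _ fun i _ => (hcu i).mul (hcψ i)))).sub
        ((continuous_const.mul (hcφ.mul hcφ)).mul (continuous_finset_sum _ fun i _ =>
          (contDiff_pd (huiC t i) i).continuous))
    -- split the integral using the pointwise identity
    have hInt1 : IntegrableOn (fun x => ∑ i, f' i x (Pi.single i 1)) (slab L₁ L₂ d) :=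
      integrableOn_slab_of_continuous hcdiv
    have hInt2a : IntegrableOn
        (fun x => κ * (∑ i, (pd i (fun y => θ t y - θeq y) x) ^ 2)) (slab L₁ L₂ d) :=
      integrableOn_slab_of_continuous
        (continuous_const.mul (continuous_finset_sum _ fun i _ => (hcψ i).pow 2))
    have hInt2b : IntegrableOn
        (fun x => dzθeq * ((θ t x - θeq x) * u t x 2)) (slab L₁ L₂ d) :=
      integrableOn_slab_of_continuous (continuous_const.mul (hcφ.mul (hcu 2)))
    have hsplit : (∫ x in slab L₁ L₂ d, (θ t x - θeq x) * Dt t x)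
        = (∫ x in slab L₁ L₂ d, ∑ i, f' i x (Pi.single i 1))
          - (κ * (∫ x in slab L₁ L₂ d, ∑ i, (pd i (fun y => θ t y - θeq y) x) ^ 2)
             + dzθeq * (∫ x in slab L₁ L₂ d, (θ t x - θeq x) * u t x 2)) := by
      have h1 : (∫ x in slab L₁ L₂ d, (θ t x - θeq x) * Dt t x)
          = ∫ x in slab L₁ L₂ d, ((∑ i, f' i x (Pi.single i 1))
            - (κ * (∑ i, (pd i (fun y => θ t y - θeq y) x) ^ 2)
               + dzθeq * ((θ t x - θeq x) * u t x 2))) :=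
        setIntegral_congr_fun measurableSet_slab (fun x hx => hpt x hx)
      have hInt2 : IntegrableOn
          (fun x => κ * (∑ i, (pd i (fun y => θ t y - θeq y) x) ^ 2)
            + dzθeq * ((θ t x - θeq x) * u t x 2)) (slab L₁ L₂ d) := hInt2a.add hInt2b
      rw [h1, integral_sub hInt1 hInt2, integral_add hInt2a hInt2b,
        integral_const_mul, integral_const_mul]
    -- divergence theorem
    have hle : aV d ≤ bV L₁ L₂ := by
      intro i
      fin_cases i <;> simp [aV, bV] <;> linarith
    have hDiv := MeasureTheory.integral_divergence_of_hasFDerivAt_off_countable'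
      (aV d) (bV L₁ L₂) hle f f' ∅ countable_empty
      (fun i => (hcf i).continuousOn)
      (fun x _ i => hf' i x)
      (hcdiv.continuousOn.integrableOn_compact isCompact_Icc)
    have hIccSlab : (∫ x in slab L₁ L₂ d, ∑ i, f' i x (Pi.single i 1))
        = ∫ x in Icc (aV d) (bV L₁ L₂), ∑ i, f' i x (Pi.single i 1) :=
      setIntegral_congr_set slab_ae_Icc
    rw [Fin.sum_univ_three] at hDiv
    -- periodicity kills the lateral faces
    have hθeqper : ∀ (c : Fin 3 → ℝ), c 2 = 0 → ∀ x, θeq (x + c) = θeq x := by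
      intro c hc x
      rw [hθeq', hθeq']
      simp [hc]
    have hper0 : ∀ y : Fin 2 → ℝ,
        f 0 (Fin.insertNth (0 : Fin 3) (bV L₁ L₂ 0) y)
          = f 0 (Fin.insertNth (0 : Fin 3) (aV d 0) y) := by
      intro y
      have hc2 : (Pi.single (0 : Fin 3) L₁ : Fin 3 → ℝ) 2 = 0 := by simp [Pi.single_apply]
      have hφper : ∀ x, θ t (x + Pi.single 0 L₁) - θeq (x + Pi.single 0 L₁)
          = θ t x - θeq x := by
        intro x
        rw [hθ_per1 t x, hθeqper (Pi.single 0 L₁) hc2 x]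
      have hfper : ∀ x, f 0 (x + Pi.single 0 L₁) = f 0 x := by
        intro x
        simp only [hfdef]
        rw [pd_periodic hφd hφper 0 x, hφper x, congrFun (hu_per1 t x) 0]
      have hx : Fin.insertNth (0 : Fin 3) (bV L₁ L₂ 0) y
          = Fin.insertNth (0 : Fin 3) (aV d 0) y + (Pi.single (0 : Fin 3) L₁ : Fin 3 → ℝ) := by
        rw [show bV L₁ L₂ 0 = L₁ from rfl, show aV d 0 = 0 from rfl, ins0, ins0]
        funext i
        fin_cases i <;> simp
      rw [hx, hfper]
    have hper1 : ∀ y : Fin 2 → ℝ,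
        f 1 (Fin.insertNth (1 : Fin 3) (bV L₁ L₂ 1) y)
          = f 1 (Fin.insertNth (1 : Fin 3) (aV d 1) y) := by
      intro y
      have hc2 : (Pi.single (1 : Fin 3) L₂ : Fin 3 → ℝ) 2 = 0 := by simp [Pi.single_apply]
      have hφper : ∀ x, θ t (x + Pi.single 1 L₂) - θeq (x + Pi.single 1 L₂)
          = θ t x - θeq x := by
        intro x
        rw [hθ_per2 t x, hθeqper (Pi.single 1 L₂) hc2 x]
      have hfper : ∀ x, f 1 (x + Pi.single 1 L₂) = f 1 x := by
        intro x
        simp only [hfdef]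
        rw [pd_periodic hφd hφper 1 x, hφper x, congrFun (hu_per2 t x) 1]
      have hx : Fin.insertNth (1 : Fin 3) (bV L₁ L₂ 1) y
          = Fin.insertNth (1 : Fin 3) (aV d 1) y + (Pi.single (1 : Fin 3) L₂ : Fin 3 → ℝ) := by
        rw [show bV L₁ L₂ 1 = L₂ from rfl, show aV d 1 = 0 from rfl, ins1, ins1]
        funext i
        fin_cases i <;> simp
      rw [hx, hfper]
    have hface0 : (∫ y in Icc (aV d ∘ Fin.succAbove 0) (bV L₁ L₂ ∘ Fin.succAbove 0),
          f 0 (Fin.insertNth 0 (bV L₁ L₂ 0) y))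
        - (∫ y in Icc (aV d ∘ Fin.succAbove 0) (bV L₁ L₂ ∘ Fin.succAbove 0),
          f 0 (Fin.insertNth 0 (aV d 0) y)) = 0 := by
      rw [show (fun y : Fin 2 → ℝ => f 0 (Fin.insertNth 0 (bV L₁ L₂ 0) y))
        = fun y => f 0 (Fin.insertNth 0 (aV d 0) y) from funext hper0, sub_self]
    have hface1 : (∫ y in Icc (aV d ∘ Fin.succAbove 1) (bV L₁ L₂ ∘ Fin.succAbove 1),
          f 1 (Fin.insertNth 1 (bV L₁ L₂ 1) y))
        - (∫ y in Icc (aV d ∘ Fin.succAbove 1) (bV L₁ L₂ ∘ Fin.succAbove 1),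
          f 1 (Fin.insertNth 1 (aV d 1) y)) = 0 := by
      rw [show (fun y : Fin 2 → ℝ => f 1 (Fin.insertNth 1 (bV L₁ L₂ 1) y))
        = fun y => f 1 (Fin.insertNth 1 (aV d 1) y) from funext hper1, sub_self]
    -- top and bottom faces via the boundary conditions
    have htopEval : ∀ y : Fin 2 → ℝ,
        f 2 (Fin.insertNth (2 : Fin 3) (bV L₁ L₂ 2) y)
          = -βp * (θ t ![y 0, y 1, 0] - θeq ![y 0, y 1, 0]) ^ 2 := by
      intro y
      have hins : Fin.insertNth (2 : Fin 3) (bV L₁ L₂ 2) y = ![y 0, y 1, 0] := by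
        rw [show bV L₁ L₂ 2 = 0 from rfl, ins2]
      rw [hins]
      have hu0 : u t ![y 0, y 1, 0] 2 = 0 := hu3_top t ht (y 0, y 1)
      have hb : κ * pd 2 (θ t) ![y 0, y 1, 0]
          = βp * (θbar - θ t ![y 0, y 1, 0]) := hbc_top t ht (y 0, y 1)
      have hx2 : (![y 0, y 1, 0] : Fin 3 → ℝ) 2 = 0 := rfl
      simp only [hfdef]
      rw [hu0, hsub 2 ![y 0, y 1, 0], hθeqD 2 ![y 0, y 1, 0], e2, hθeq' ![y 0, y 1, 0], hx2]
      linear_combination (θ t ![y 0, y 1, 0] - (c₀ + dzθeq * 0)) * hb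
        + (θ t ![y 0, y 1, 0] - (c₀ + dzθeq * 0)) * htop_alg
    have hbotEval : ∀ y : Fin 2 → ℝ,
        f 2 (Fin.insertNth (2 : Fin 3) (aV d 2) y)
          = βm * (θ t ![y 0, y 1, -d] - θeq ![y 0, y 1, -d]) ^ 2 := by
      intro y
      have hins : Fin.insertNth (2 : Fin 3) (aV d 2) y = ![y 0, y 1, -d] := by
        rw [show aV d 2 = -d from rfl, ins2]
      rw [hins]
      have hu0 : u t ![y 0, y 1, -d] 2 = 0 := hu3_bot t ht (y 0, y 1)
      have hb : κ * pd 2 (θ t) ![y 0, y 1, -d]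
          = βm * θ t ![y 0, y 1, -d] := hbc_bot t ht (y 0, y 1)
      have hx2 : (![y 0, y 1, -d] : Fin 3 → ℝ) 2 = -d := rfl
      simp only [hfdef]
      rw [hu0, hsub 2 ![y 0, y 1, -d], hθeqD 2 ![y 0, y 1, -d], e2, hθeq' ![y 0, y 1, -d], hx2]
      linear_combination (θ t ![y 0, y 1, -d] - (c₀ + dzθeq * (-d))) * hb
        - (θ t ![y 0, y 1, -d] - (c₀ + dzθeq * (-d))) * hbot_alg
    have hfc : Icc (aV d ∘ Fin.succAbove 2) (bV L₁ L₂ ∘ Fin.succAbove 2)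
        = Icc (![0, 0] : Fin 2 → ℝ) ![L₁, L₂] := by
      have h1 : (aV d ∘ Fin.succAbove 2) = ![(0 : ℝ), 0] := by
        funext j; fin_cases j <;> rfl
      have h2 : (bV L₁ L₂ ∘ Fin.succAbove 2) = ![L₁, L₂] := by
        funext j; fin_cases j <;> rfl
      rw [h1, h2]
    have hfaceTop : (∫ y in Icc (aV d ∘ Fin.succAbove 2) (bV L₁ L₂ ∘ Fin.succAbove 2),
          f 2 (Fin.insertNth 2 (bV L₁ L₂ 2) y))
        = -βp * ∫ p in rect L₁ L₂, (θ t ![p.1, p.2, 0] - θeq ![p.1, p.2, 0]) ^ 2 := by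
      rw [hfc, integral_face L₁ L₂
        (fun p : ℝ × ℝ => -βp * (θ t ![p.1, p.2, 0] - θeq ![p.1, p.2, 0]) ^ 2)
        (fun y => f 2 (Fin.insertNth 2 (bV L₁ L₂ 2) y)) (fun y => htopEval y),
        integral_const_mul]
    have hfaceBot : (∫ y in Icc (aV d ∘ Fin.succAbove 2) (bV L₁ L₂ ∘ Fin.succAbove 2),
          f 2 (Fin.insertNth 2 (aV d 2) y))
        = βm * ∫ p in rect L₁ L₂, (θ t ![p.1, p.2, -d] - θeq ![p.1, p.2, -d]) ^ 2 := by
      rw [hfc, integral_face L₁ L₂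
        (fun p : ℝ × ℝ => βm * (θ t ![p.1, p.2, -d] - θeq ![p.1, p.2, -d]) ^ 2)
        (fun y => f 2 (Fin.insertNth 2 (aV d 2) y)) (fun y => hbotEval y),
        integral_const_mul]
    rw [hface0, hface1, hfaceTop, hfaceBot] at hDiv
    rw [hsplit, hIccSlab, hDiv]
    ring
  -- assemble
  have h3 := hEnergy.const_mul (1 / 2 : ℝ)
  have h4 : (1 / 2 : ℝ) * ∫ x in slab L₁ L₂ d, 2 * (θ t x - θeq x) * Dt t x
      = ∫ x in slab L₁ L₂ d, (θ t x - θeq x) * Dt t x := by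
    rw [← integral_const_mul]
    congr 1
    funext x
    ring
  rw [h4, hIBP] at h3
  exact h3.hasDerivWithinAt
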